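/- For any real x ≥ 1 and any ε with 0 < ε ≤ 1, ∫₀^ε √(x + log(1/u)) du ≤ 2ε·√(x + log(1/ε)). -/

import Mathlib

/-!
With `A = x + log (1/ε) ≥ 1` and `s = log (ε/u) ≥ 0`, the integrand is `√(A + s)`, and `A ≥ 1` gives
`√(A + s) ≤ √A (1 + s/2)`. Since `∫₀^ε log (ε/u) du = ε`, the integral is at most `(3/2) ε √A`.
-/

open MeasureTheory Real

theorem log_div_eq_log_sub_log_ae {c : ℝ} (hc : c ≠ 0) :
    (fun u => log (c / u)) =ᵐ[volume] fun u => log c - log u := by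
  filter_upwards [Measure.ae_ne volume 0] with u hu using log_div hc hu

theorem intervalIntegrable_log_const_div {c : ℝ} (hc : c ≠ 0) (a b : ℝ) :
    IntervalIntegrable (fun u => log (c / u)) volume a b :=
  (intervalIntegrable_const.sub intervalIntegral.intervalIntegrable_log').congr_ae
    (ae_restrict_of_ae (log_div_eq_log_sub_log_ae hc).symm)

theorem integral_log_const_div (c : ℝ) : ∫ u in (0)..c, log (c / u) = c := by
  rcases eq_or_ne c 0 with rfl | hc
  · simp
  rw [intervalIntegral.integral_congr_ae ((log_div_eq_log_sub_log_ae hc).mono fun u hu _ => hu),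
    intervalIntegral.integral_sub intervalIntegrable_const intervalIntegral.intervalIntegrable_log',
    integral_log]
  simp

theorem sqrt_add_le_sqrt_mul_one_add_half {a s : ℝ} (ha : 1 ≤ a) (hs : 0 ≤ s) :
    √(a + s) ≤ √a * (1 + s / 2) := by
  rw [← sqrt_sq (by positivity : 0 ≤ 1 + s / 2), ← sqrt_mul (by positivity)]
  exact sqrt_le_sqrt (by
    nlinarith [mul_nonneg (sub_nonneg.2 ha) hs, mul_nonneg (zero_le_one.trans ha) (sq_nonneg s)])

theorem integral_sqrt_add_log_inv_le (x : ℝ) (hx : 1 ≤ x) (ε : ℝ) (hε0 : 0 < ε) (hε1 : ε ≤ 1) :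
    (∫ u in Set.Ioc (0:ℝ) ε, Real.sqrt (x + Real.log (1 / u))) ≤
      2 * ε * Real.sqrt (x + Real.log (1 / ε)) := by
  set A := x + log (1 / ε)
  have hA : 1 ≤ A := by
    have : 0 ≤ log (1 / ε) := log_nonneg (one_le_one_div hε0 hε1)
    linarith
  have h_le : ∀ u ∈ Set.Ioc 0 ε, √(x + log (1 / u)) ≤ √A * (1 + log (ε / u) / 2) := by
    rintro u ⟨hu0, huε⟩
    have h_split : x + log (1 / u) = A + log (ε / u) := by
      simp only [A, log_div hε0.ne' hu0.ne', one_div, log_inv]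
      ring
    rw [h_split]
    exact sqrt_add_le_sqrt_mul_one_add_half hA (log_nonneg ((one_le_div hu0).2 huε))
  have h_log := (intervalIntegrable_log_const_div hε0.ne' 0 ε).div_const 2
  calc (∫ u in Set.Ioc 0 ε, √(x + log (1 / u)))
      ≤ ∫ u in Set.Ioc 0 ε, √A * (1 + log (ε / u) / 2) :=
        setIntegral_mono_of_nonneg (fun _ _ => sqrt_nonneg _) h_le
          ((intervalIntegrable_iff_integrableOn_Ioc_of_le hε0.le).1
            ((intervalIntegrable_const.add h_log).const_mul √A))
    _ = 3 / 2 * ε * √A := by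
      rw [← intervalIntegral.integral_of_le hε0.le, intervalIntegral.integral_const_mul,
        intervalIntegral.integral_add intervalIntegrable_const h_log,
        intervalIntegral.integral_div, integral_log_const_div]
      simp only [intervalIntegral.integral_const, sub_zero, smul_eq_mul, mul_one]
      ring
    _ ≤ 2 * ε * √A := by gcongr; norm_num
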